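/- Let G = (V,E) be a graph on n vertices for which there exists no induced subgraph on at least m vertices that is an ε-expander. Then for every subset B ⊆ V with |B| ≥ (3/2)m, the induced subgraph G[B] contains a nonempty subset U with |U| ≤ (3/2)m and |∂_{G[B]} U| ≤ c·ε·log(n)·|U|, where c is a universal constant. -/

import Mathlib

open Finset

variable {V : Type*} [Fintype V] [DecidableEq V]

/-- Number of edges of `G` with one endpoint in `A` and the other in `W` (for disjoint `A`, `W`),
counted as ordered pairs, hence exactly once per edge. -/
def bdryTo (G : SimpleGraph V) [DecidableRel G.Adj] (A W : Finset V) : ℕ :=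
  ((A ×ˢ W).filter fun p => G.Adj p.1 p.2).card

/-- Number of boundary edges of `A` inside the induced subgraph `G[B]`:
edges of `G` with one endpoint in `A` and the other in `B \ A`. -/
def bdryIn (G : SimpleGraph V) [DecidableRel G.Adj] (B A : Finset V) : ℕ :=
  bdryTo G A (B \ A)

/-- The induced subgraph `G[U]` is an `ε`-expander: every `W ⊆ U` with `|W| ≤ |U|/2`
has at least `ε|W|` boundary edges inside `G[U]`. -/
def IsExpanderOn (G : SimpleGraph V) [DecidableRel G.Adj] (U : Finset V) (ε : ℝ) : Prop :=
  ∀ W ⊆ U, 2 * W.card ≤ U.card → ε * W.card ≤ (bdryIn G U W : ℝ)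

/-!
Split recursively: a piece `C ⊆ B` with at least `m` vertices is not an `ε`-expander, so it has a
cut `W` with `|W| ≤ |C|/2` and fewer than `ε|W|` edges across. The potential
`Φ(C) = ∂_B C + κ ε |C| log |C|` with `κ = 2 / log 2` does not increase under such a split: the
entropy term drops by at least `κ ε |W| log 2 = 2ε|W|`, which pays for the cut edges, now
boundary edges of both pieces. By the mediant inequality some final piece `U`, of size `< m`,
has `∂_B U / |U| ≤ Φ(B) / |B| = κ ε log |B| ≤ 3 ε log n`.
-/

section Boundary

variable (G : SimpleGraph V) [DecidableRel G.Adj]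

lemma bdryTo_comm (A W : Finset V) : bdryTo G A W = bdryTo G W A :=
  card_nbij' Prod.swap Prod.swap
    (fun p hp => by simp_all [G.adj_comm]) (fun p hp => by simp_all [G.adj_comm])
    (fun _ _ => rfl) (fun _ _ => rfl)

lemma bdryTo_union_right (A : Finset V) {W₁ W₂ : Finset V} (h : Disjoint W₁ W₂) :
    bdryTo G A (W₁ ∪ W₂) = bdryTo G A W₁ + bdryTo G A W₂ := by
  rw [bdryTo, product_union, filter_union, card_union_of_disjoint
    (disjoint_filter_filter (disjoint_product.mpr (Or.inr h)))]
  rfl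

lemma bdryTo_union_left {A₁ A₂ : Finset V} (W : Finset V) (h : Disjoint A₁ A₂) :
    bdryTo G (A₁ ∪ A₂) W = bdryTo G A₁ W + bdryTo G A₂ W := by
  rw [bdryTo_comm, bdryTo_union_right G W h, bdryTo_comm G W, bdryTo_comm G W]

lemma bdryIn_self (B : Finset V) : bdryIn G B B = 0 := by
  simp [bdryIn, bdryTo]

/-- Splitting `C ⊆ B` into `W` and `C \ W` creates the edges of the cut `(W, C \ W)` as new
boundary edges, each counted once from either side. -/
lemma bdryIn_add_bdryIn_sdiff {W C B : Finset V} (hWC : W ⊆ C) (hCB : C ⊆ B) :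
    bdryIn G B W + bdryIn G B (C \ W) = bdryIn G B C + 2 * bdryIn G C W := by
  have hW : bdryIn G B W = bdryTo G W (C \ W) + bdryTo G W (B \ C) := by
    rw [bdryIn, ← sdiff_union_sdiff_cancel hCB hWC, union_comm,
      bdryTo_union_right G W (disjoint_sdiff_self_left.mono_right sdiff_subset).symm]
  have hCW : bdryIn G B (C \ W) = bdryTo G W (C \ W) + bdryTo G (C \ W) (B \ C) := by
    rw [bdryIn, sdiff_sdiff_eq_sdiff_union (hWC.trans hCB), union_comm,
      bdryTo_union_right G _ (disjoint_sdiff_self_right.mono_left hWC), bdryTo_comm G _ W]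
  have hC : bdryIn G B C = bdryTo G W (B \ C) + bdryTo G (C \ W) (B \ C) := by
    rw [bdryIn, ← bdryTo_union_left G _ disjoint_sdiff, union_sdiff_of_subset hWC]
  rw [hW, hCW, hC, bdryIn]
  ring

end Boundary

lemma isExpanderOn_empty (G : SimpleGraph V) [DecidableRel G.Adj] (ε : ℝ) :
    IsExpanderOn G ∅ ε := by
  intro W hW _
  simp [subset_empty.mp hW]

lemma exists_sparse_cut_of_not_isExpanderOn {G : SimpleGraph V} [DecidableRel G.Adj]
    {C : Finset V} {ε : ℝ} (h : ¬ IsExpanderOn G C ε) :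
    ∃ W ⊆ C, W.Nonempty ∧ 2 * W.card ≤ C.card ∧ (bdryIn G C W : ℝ) < ε * W.card := by
  simp only [IsExpanderOn, not_forall, not_le, exists_prop] at h
  obtain ⟨W, hWC, hW, hcut⟩ := h
  refine ⟨W, hWC, nonempty_iff_ne_empty.mpr ?_, hW, hcut⟩
  rintro rfl
  simp [bdryIn, bdryTo] at hcut

lemma mul_log_add_mul_log_add_log_two_mul_le {w c : ℝ} (hw : 0 < w) (hwc : w ≤ c) :
    w * Real.log w + c * Real.log c + Real.log 2 * w ≤ (w + c) * Real.log (w + c) := by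
  have hc : 0 < c := hw.trans_le hwc
  have hlog_w : Real.log w + Real.log 2 ≤ Real.log (w + c) := by
    rw [← Real.log_mul hw.ne' two_ne_zero]
    exact Real.log_le_log (by positivity) (by linarith)
  have hlog_c : Real.log c ≤ Real.log (w + c) := Real.log_le_log hc (by linarith)
  nlinarith [mul_le_mul_of_nonneg_left hlog_w hw.le, mul_le_mul_of_nonneg_left hlog_c hc.le]

/-- The mediant inequality `min (x₁/u₁) (x₂/u₂) ≤ (A₁ + A₂)/(c₁ + c₂)`, cross-multiplied. -/
lemma mul_le_mul_mediant_or {x₁ x₂ u₁ u₂ c₁ c₂ A₁ A₂ : ℝ} (hu₁ : 0 < u₁) (hu₂ : 0 < u₂)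
    (hc₁ : 0 ≤ c₁) (hc₂ : 0 ≤ c₂) (h₁ : c₁ * x₁ ≤ A₁ * u₁) (h₂ : c₂ * x₂ ≤ A₂ * u₂) :
    (c₁ + c₂) * x₁ ≤ (A₁ + A₂) * u₁ ∨ (c₁ + c₂) * x₂ ≤ (A₁ + A₂) * u₂ := by
  rcases le_total (x₁ * u₂) (x₂ * u₁) with h | h
  · left
    have : c₂ * x₁ * u₂ ≤ A₂ * u₁ * u₂ := by nlinarith
    nlinarith [le_of_mul_le_mul_right this hu₂]
  · right
    have : c₁ * x₂ * u₁ ≤ A₁ * u₂ * u₁ := by nlinarith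
    nlinarith [le_of_mul_le_mul_right this hu₁]

noncomputable def cutPotential (G : SimpleGraph V) [DecidableRel G.Adj] (ε : ℝ)
    (B C : Finset V) : ℝ :=
  bdryIn G B C + 2 / Real.log 2 * ε * C.card * Real.log C.card

section Potential

variable {G : SimpleGraph V} [DecidableRel G.Adj] {ε : ℝ}

lemma cutPotential_add_le (hε : 0 ≤ ε) {W C B : Finset V} (hWC : W ⊆ C) (hCB : C ⊆ B)
    (hW : W.Nonempty) (hhalf : 2 * W.card ≤ C.card) (hcut : (bdryIn G C W : ℝ) ≤ ε * W.card) :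
    cutPotential G ε B W + cutPotential G ε B (C \ W) ≤ cutPotential G ε B C := by
  have hcardℕ := card_sdiff_add_card_eq_card hWC
  have hcard : ((C \ W).card : ℝ) + W.card = C.card := by exact_mod_cast hcardℕ
  have hsplit : (bdryIn G B W : ℝ) + bdryIn G B (C \ W) = bdryIn G B C + 2 * bdryIn G C W := by
    exact_mod_cast bdryIn_add_bdryIn_sdiff G hWC hCB
  have hentropy := mul_log_add_mul_log_add_log_two_mul_le (w := W.card) (c := (C \ W).card)
    (by exact_mod_cast hW.card_pos) (by exact_mod_cast (by omega : W.card ≤ (C \ W).card))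
  rw [add_comm (W.card : ℝ), hcard] at hentropy
  have hlog2 : 0 < Real.log 2 := Real.log_pos one_lt_two
  have hpay : 2 / Real.log 2 * ε * (Real.log 2 * W.card) = 2 * (ε * W.card) := by
    field_simp
  have hκε : 0 ≤ 2 / Real.log 2 * ε := by positivity
  have := mul_le_mul_of_nonneg_left hentropy hκε
  simp only [cutPotential]
  nlinarith

lemma bdryIn_le_cutPotential (hε : 0 ≤ ε) (B C : Finset V) :
    (bdryIn G B C : ℝ) ≤ cutPotential G ε B C := by
  have := Real.log_natCast_nonneg C.card
  have := Real.log_pos one_lt_two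
  unfold cutPotential
  have : 0 ≤ 2 / Real.log 2 * ε * C.card * Real.log C.card := by positivity
  linarith

lemma exists_small_subset_bdryIn_le (hε : 0 ≤ ε) {m : ℕ}
    (hno : ∀ C : Finset V, m ≤ C.card → ¬ IsExpanderOn G C ε) {B C : Finset V}
    (hCB : C ⊆ B) (hC : C.Nonempty) :
    ∃ U ⊆ C, U.Nonempty ∧ U.card < m ∧
      (C.card : ℝ) * bdryIn G B U ≤ cutPotential G ε B C * U.card := by
  induction C using Finset.strongInduction with
  | H C ih =>
    by_cases hm : C.card < m
    · exact ⟨C, subset_rfl, hC, hm, by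
        rw [mul_comm]; gcongr; exact bdryIn_le_cutPotential hε B C⟩
    obtain ⟨W, hWC, hW, hhalf, hcut⟩ :=
      exists_sparse_cut_of_not_isExpanderOn (hno C (not_lt.mp hm))
    have hcard := card_sdiff_add_card_eq_card hWC
    have hW' : (C \ W).Nonempty := card_pos.mp (by have := hW.card_pos; omega)
    have hWC' : W ⊂ C := ssubset_of_subset_of_ne hWC (by rintro rfl; have := hW.card_pos; omega)
    obtain ⟨U₁, hU₁W, hU₁, hU₁m, h₁⟩ := ih W hWC' (hWC.trans hCB) hW
    obtain ⟨U₂, hU₂W, hU₂, hU₂m, h₂⟩ :=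
      ih (C \ W) (sdiff_ssubset hWC hW) (sdiff_subset.trans hCB) hW'
    have hpot := cutPotential_add_le hε hWC hCB hW hhalf hcut.le
    have hcardℝ : (W.card : ℝ) + (C \ W).card = C.card := by
      exact_mod_cast (add_comm _ _).trans hcard
    rcases mul_le_mul_mediant_or (by exact_mod_cast hU₁.card_pos) (by exact_mod_cast hU₂.card_pos)
      (Nat.cast_nonneg _) (Nat.cast_nonneg _) h₁ h₂ with h | h
    · refine ⟨U₁, hU₁W.trans hWC, hU₁, hU₁m, ?_⟩
      rw [← hcardℝ]
      exact h.trans (by gcongr)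
    · refine ⟨U₂, hU₂W.trans sdiff_subset, hU₂, hU₂m, ?_⟩
      rw [← hcardℝ]
      exact h.trans (by gcongr)

end Potential

lemma two_div_log_two_le_three : 2 / Real.log 2 ≤ 3 := by
  rw [div_le_iff₀ (Real.log_pos one_lt_two)]
  linarith [Real.log_two_gt_d9]

/-- Expansion concentration, contrapositive form: if no induced subgraph of `G` on at least `m`
vertices is an `ε`-expander, then every `B` with `|B| ≥ (3/2)m` contains a nonempty `U` with
`|U| ≤ (3/2)m` and `|∂_{G[B]} U| ≤ c·ε·log(n)·|U|`, for a universal constant `c`. -/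
theorem stmt5 : ∃ c : ℝ, 0 < c ∧
    ∀ (V : Type) (_ : Fintype V) (_ : DecidableEq V)
      (G : SimpleGraph V) (_ : DecidableRel G.Adj) (m : ℕ) (ε : ℝ), 0 ≤ ε →
      (¬ ∃ U : Finset V, m ≤ U.card ∧ IsExpanderOn G U ε) →
      ∀ B : Finset V, 3 * m ≤ 2 * B.card →
        ∃ U ⊆ B, U.Nonempty ∧ 2 * U.card ≤ 3 * m ∧
          (bdryIn G B U : ℝ) ≤ c * ε * Real.log (Fintype.card V) * U.card := by
  refine ⟨3, three_pos, fun V _ _ G _ m ε hε hno B hB => ?_⟩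
  have hm : 0 < m := Nat.pos_of_ne_zero <| by
    rintro rfl
    exact hno ⟨∅, le_rfl, isExpanderOn_empty G ε⟩
  have hBpos : (0 : ℝ) < B.card := by exact_mod_cast (by omega : 0 < B.card)
  obtain ⟨U, hUB, hU, hUm, hbdry⟩ := exists_small_subset_bdryIn_le hε
    (fun C hC hexp => hno ⟨C, hC, hexp⟩) subset_rfl (card_pos.mp (by exact_mod_cast hBpos))
  refine ⟨U, hUB, hU, by omega, ?_⟩
  rw [cutPotential, bdryIn_self, Nat.cast_zero, zero_add] at hbdry
  have hlogB := Real.log_natCast_nonneg B.card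
  calc (bdryIn G B U : ℝ) ≤ 2 / Real.log 2 * ε * Real.log B.card * U.card :=
        le_of_mul_le_mul_left (by linarith) hBpos
    _ ≤ 3 * ε * Real.log (Fintype.card V) * U.card := by
        gcongr
        · exact two_div_log_two_le_three
        · exact_mod_cast card_le_univ B
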